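/- arXiv:1006.2123 — 3 statements merged into one kernel-verified Lean document; each statement's English description precedes it below -/
import Mathlib

section
/- Let X be a topological space and let S, S' be minimal cut sets of X (i.e., subsets whose removal disconnects X, no proper subset of which has this property). If S' crosses S (meaning S' \ S has points in at least two distinct connected components of X \ S), then S crosses S'. -/
/-- A cut set of a topological space: a subset whose complement is disconnected. -/
def IsCutSet (X : Type*) [TopologicalSpace X] (S : Set X) : Prop :=
  ¬ IsPreconnected (Sᶜ : Set X)

/-- A minimal cut set: no proper subset is a cut set. -/
def IsMinCutSet (X : Type*) [TopologicalSpace X] (S : Set X) : Prop :=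
  IsCutSet X S ∧ ∀ S' ⊂ S, ¬ IsCutSet X S'

/-- `S'` crosses `S` if `S' \ S` has points in at least two distinct connected
components of `X \ S`. -/
def Crosses (X : Type*) [TopologicalSpace X] (S' S : Set X) : Prop :=
  ∃ a b : X, a ∈ S' \ S ∧ b ∈ S' \ S ∧
    connectedComponentIn (Sᶜ : Set X) a ≠ connectedComponentIn (Sᶜ : Set X) b

/-- If `Z` is preconnected, `z ∈ Z` and `A` is relatively clopen in `Z \ {z}`,
then `A ∪ {z}` is preconnected. -/
lemma lemA {X : Type*} [TopologicalSpace X] {Z A : Set X} {z : X}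
    (hZ : IsPreconnected Z) (hzZ : z ∈ Z)
    (O F : Set X) (hO : IsOpen O) (hF : IsClosed F)
    (hAO : A = (Z \ {z}) ∩ O) (hAF : A = (Z \ {z}) ∩ F) :
    IsPreconnected (A ∪ {z}) := by
  by_contra h
  unfold IsPreconnected at h
  push_neg at h
  obtain ⟨u, v, hu, hv, hcov, hneu, hnev, hdisj⟩ := h
  -- wlog-style inner argument with `z ∈ u`
  have inner : ∀ u v : Set X, IsOpen u → IsOpen v → (A ∪ {z}) ⊆ u ∪ v →
      ((A ∪ {z}) ∩ v).Nonempty → (A ∪ {z}) ∩ (u ∩ v) = ∅ → z ∈ u → False := by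
    intro u v hu hv hcov hnev hdisj hzu
    have hzmem : z ∈ A ∪ {z} := Or.inr rfl
    have hzv : z ∉ v := by
      intro hzv
      have : z ∈ (A ∪ {z}) ∩ (u ∩ v) := ⟨hzmem, hzu, hzv⟩
      rw [hdisj] at this; exact this
    set D : Set X := A ∩ v with hD
    have hDne : D.Nonempty := by
      obtain ⟨x, hx, hxv⟩ := hnev
      rcases hx with hx | hx
      · exact ⟨x, hx, hxv⟩
      · exact absurd (hx ▸ hxv) hzv
    have hDopen : D = Z ∩ (O ∩ v) := by
      apply Set.Subset.antisymm
      · rintro x ⟨hxA, hxv⟩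
        have := hAO ▸ hxA
        exact ⟨this.1.1, this.2, hxv⟩
      · rintro x ⟨hxZ, hxO, hxv⟩
        have hxz : x ≠ z := fun h => hzv (h ▸ hxv)
        exact ⟨hAO ▸ ⟨⟨hxZ, hxz⟩, hxO⟩, hxv⟩
    have hDclosed : D = Z ∩ (F ∩ uᶜ) := by
      apply Set.Subset.antisymm
      · rintro x ⟨hxA, hxv⟩
        have h1 := hAF ▸ hxA
        refine ⟨h1.1.1, h1.2, fun hxu => ?_⟩
        have : x ∈ (A ∪ {z}) ∩ (u ∩ v) := ⟨Or.inl hxA, hxu, hxv⟩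
        rw [hdisj] at this; exact this
      · rintro x ⟨hxZ, hxF, hxu⟩
        have hxz : x ≠ z := fun h => hxu (h ▸ hzu)
        have hxA : x ∈ A := hAF ▸ ⟨⟨hxZ, hxz⟩, hxF⟩
        have hxv : x ∈ v := by
          rcases hcov (Or.inl hxA) with h | h
          · exact absurd h hxu
          · exact h
        exact ⟨hxA, hxv⟩
    have hres := hZ (O ∩ v) (F ∩ uᶜ)ᶜ (hO.inter hv)
      (hF.inter (isClosed_compl_iff.mpr hu)).isOpen_compl
      (by
        intro x hxZ
        by_cases hx : x ∈ F ∩ uᶜ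
        · left
          have : x ∈ D := hDclosed ▸ ⟨hxZ, hx⟩
          exact (hDopen ▸ this).2
        · exact Or.inr hx)
      (by
        obtain ⟨x, hx⟩ := hDne
        exact ⟨x, (hDopen ▸ hx : x ∈ Z ∩ (O ∩ v))⟩)
      ⟨z, hzZ, fun h => h.2 hzu⟩
    obtain ⟨x, hxZ, hxOv, hxc⟩ := hres
    have hxD : x ∈ D := hDopen ▸ (⟨hxZ, hxOv⟩ : x ∈ Z ∩ (O ∩ v))
    exact hxc (hDclosed ▸ hxD : x ∈ Z ∩ (F ∩ uᶜ)).2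
  rcases hcov (Or.inr rfl : z ∈ A ∪ {z}) with hz | hz
  · exact inner u v hu hv hcov hnev hdisj hz
  · exact inner v u hv hu (by rwa [Set.union_comm v u]) hneu
      (by rwa [Set.inter_comm v u]) hz

/-- For minimal cut sets, the crossing relation is symmetric. -/
theorem stmt_1 {X : Type*} [TopologicalSpace X] (S S' : Set X)
    (hS : IsMinCutSet X S) (hS' : IsMinCutSet X S')
    (hcross : Crosses X S' S) : Crosses X S S' := by
  by_contra hnc
  unfold Crosses at hnc
  push_neg at hnc
  obtain ⟨a, b, ⟨haS', haS⟩, ⟨hbS', hbS⟩, hab⟩ := hcross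
  -- minimality of `S'` gives preconnectedness after putting back a single point
  have hput : ∀ c : X, c ∈ S' → IsPreconnected (S'ᶜ ∪ {c} : Set X) := by
    intro c hc
    have h := hS'.2 (S' \ {c}) (Set.sdiff_singleton_ssubset.mpr hc)
    rw [IsCutSet, not_not] at h
    convert h using 1
    ext x
    simp only [Set.mem_union, Set.mem_compl_iff, Set.mem_diff, Set.mem_singleton_iff, not_and,
      not_not]
    constructor
    · rintro (hx | rfl)
      · intro h'; exact absurd h' hx
      · intro _; rfl
    · intro hx
      by_cases hxS : x ∈ S'
      · exact Or.inr (hx hxS)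
      · exact Or.inl hxS
  have hZa : IsPreconnected (S'ᶜ ∪ {a} : Set X) := hput a haS'
  have hZb : IsPreconnected (S'ᶜ ∪ {b} : Set X) := hput b hbS'
  have hdiff : ∀ c : X, c ∈ S' → (S'ᶜ ∪ {c} : Set X) \ {c} = S'ᶜ := by
    intro c hc
    ext x
    simp only [Set.mem_diff, Set.mem_union, Set.mem_compl_iff, Set.mem_singleton_iff]
    constructor
    · rintro ⟨hx | rfl, hxc⟩
      · exact hx
      · exact absurd rfl hxc
    · intro hx
      exact ⟨Or.inl hx, fun h => hx (h ▸ hc)⟩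
  -- the key step: if one side of a separation of `S'ᶜ` avoids `S`, contradiction
  have key : ∀ u v : Set X, IsOpen u → IsOpen v → S'ᶜ ⊆ u ∪ v →
      S'ᶜ ∩ (u ∩ v) = ∅ → (S'ᶜ ∩ v).Nonempty → S ∩ (S'ᶜ ∩ v) = ∅ → False := by
    intro u v hu hv hcov hdisj hne hSv
    set Q : Set X := S'ᶜ ∩ v with hQdef
    have hQF : Q = S'ᶜ ∩ uᶜ := by
      apply Set.Subset.antisymm
      · rintro x ⟨hx, hxv⟩
        refine ⟨hx, fun hxu => ?_⟩
        have : x ∈ S'ᶜ ∩ (u ∩ v) := ⟨hx, hxu, hxv⟩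
        rw [hdisj] at this; exact this
      · rintro x ⟨hx, hxu⟩
        rcases hcov hx with h | h
        · exact absurd h hxu
        · exact ⟨hx, h⟩
    have hQa : IsPreconnected (Q ∪ {a}) :=
      lemA hZa (Or.inr rfl) v uᶜ hv hu.isClosed_compl
        (by rw [hdiff a haS']) (by rw [hdiff a haS']; exact hQF)
    have hQb : IsPreconnected (Q ∪ {b}) :=
      lemA hZb (Or.inr rfl) v uᶜ hv hu.isClosed_compl
        (by rw [hdiff b hbS']) (by rw [hdiff b hbS']; exact hQF)
    obtain ⟨q, hq⟩ := hne
    have hunion : IsPreconnected ((Q ∪ {a}) ∪ (Q ∪ {b})) :=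
      IsPreconnected.union q (Or.inl hq) (Or.inl hq) hQa hQb
    have hsub : (Q ∪ {a}) ∪ (Q ∪ {b}) ⊆ (Sᶜ : Set X) := by
      rintro x (hx | hx) <;> rcases hx with hx | rfl
      · intro hxS
        have : x ∈ S ∩ (S'ᶜ ∩ v) := ⟨hxS, hx⟩
        rw [hSv] at this; exact this
      · exact haS
      · intro hxS
        have : x ∈ S ∩ (S'ᶜ ∩ v) := ⟨hxS, hx⟩
        rw [hSv] at this; exact this
      · exact hbS
    have hbmem : b ∈ connectedComponentIn (Sᶜ : Set X) a :=
      hunion.subset_connectedComponentIn (Or.inl (Or.inr rfl)) hsub (Or.inr (Or.inr rfl))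
    exact hab (connectedComponentIn_eq hbmem)
  -- get a separation of `S'ᶜ`
  have hsep := hS'.1
  rw [IsCutSet] at hsep
  unfold IsPreconnected at hsep
  push_neg at hsep
  obtain ⟨u, v, hu, hv, hcov, hneu, hnev, hdisj⟩ := hsep
  by_cases hcase : S ∩ (S'ᶜ ∩ v) = ∅
  · exact key u v hu hv hcov hdisj hnev hcase
  · rw [← Set.not_nonempty_iff_eq_empty, not_not] at hcase
    obtain ⟨x, hxS, hxS', hxv⟩ := hcase
    have hSu : S ∩ (S'ᶜ ∩ u) = ∅ := by
      rw [← Set.not_nonempty_iff_eq_empty]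
      rintro ⟨y, hyS, hyS', hyu⟩
      have hxcc := hnc x y ⟨hxS, hxS'⟩ ⟨hyS, hyS'⟩
      have hD := (isPreconnected_connectedComponentIn (x := x) (F := (S'ᶜ : Set X)))
      have hres := hD u v hu hv
        ((connectedComponentIn_subset _ _).trans hcov)
        ⟨y, hxcc ▸ mem_connectedComponentIn hyS', hyu⟩
        ⟨x, mem_connectedComponentIn hxS', hxv⟩
      obtain ⟨w, hw, hwuv⟩ := hres
      have : w ∈ S'ᶜ ∩ (u ∩ v) := ⟨connectedComponentIn_subset _ _ hw, hwuv⟩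
      rw [hdisj] at this; exact this
    exact key v u hv hu (by rwa [Set.union_comm v u]) (by rwa [Set.inter_comm v u]) hneu hSu
end

section
/- With notation as in the construction of the decomposition space D for a line pattern L in a free group F: if there is a free basis B of F such that the Whitehead graph Wh_B(*) of L is disconnected, then D is disconnected. -/
/-- The inverse of a letter `b^{±1}` of the free group on `β`. -/
def Letter.inv {β : Type*} (p : β × Bool) : β × Bool := (p.1, !p.2)

/-- The boundary at infinity of the Cayley tree of the free group on `β`:
infinite reduced words in the generators and their inverses. -/
def TreeBoundary (β : Type*) : Type _ :=
  {s : ℕ → β × Bool // ∀ n, s (n + 1) ≠ Letter.inv (s n)}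

instance (β : Type*) [TopologicalSpace β] : TopologicalSpace (TreeBoundary β) :=
  inferInstanceAs (TopologicalSpace {s : ℕ → β × Bool // ∀ n, s (n + 1) ≠ Letter.inv (s n)})

/-- The first `n` letters of a boundary point. -/
def prefixWord {β : Type*} (ξ : TreeBoundary β) (n : ℕ) : List (β × Bool) :=
  List.ofFn (fun m : Fin n => ξ.1 m)

/-- A sequence of vertices of the Cayley tree (elements of the free group)
converges to the boundary point `ξ` if, for every `n`, the reduced words of the
terms eventually all begin with the first `n` letters of `ξ`. -/
def ConvergesTo {β : Type*} [DecidableEq β] (u : ℕ → FreeGroup β)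
    (ξ : TreeBoundary β) : Prop :=
  ∀ n : ℕ, ∃ i₀ : ℕ, ∀ i ≥ i₀, (u i).toWord.take n = prefixWord ξ n

/-- A word of the free group is cyclically reduced if its first letter is not
the inverse of its last letter. -/
def CyclicallyReduced {β : Type*} [DecidableEq β] (w : FreeGroup β) : Prop :=
  ∀ h : w.toWord ≠ [], w.toWord.head h ≠ Letter.inv (w.toWord.getLast h)

/-- `w` is not a proper power. -/
def NotProperPower {β : Type*} (w : FreeGroup β) : Prop :=
  ∀ (v : FreeGroup β) (k : ℕ), 2 ≤ k → w ≠ v ^ k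

/-- The endpoint-identification relation on the boundary of the tree defined by
the line pattern generated by the words `w j`: two boundary points are related
iff they are equal or are the two endpoints of a line `g⟨w j⟩` of the pattern. -/
def EndRel {β : Type*} [DecidableEq β] {m : ℕ} (w : Fin m → FreeGroup β)
    (ξ η : TreeBoundary β) : Prop :=
  ξ = η ∨ ∃ (g : FreeGroup β) (j : Fin m),
    (ConvergesTo (fun i => g * w j ^ i) ξ ∧ ConvergesTo (fun i => g * (w j)⁻¹ ^ i) η) ∨
    (ConvergesTo (fun i => g * w j ^ i) η ∧ ConvergesTo (fun i => g * (w j)⁻¹ ^ i) ξ)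

/-- Adjacency in the Whitehead graph `Wh_B(*)` of the line pattern generated by
the words `w j`: for each occurrence of a two-letter subword `v̄ v'` in a cyclic
word `w j`, there is an edge between the vertices `v` and `v'`. -/
def WhAdj {β : Type*} [DecidableEq β] {m : ℕ} (w : Fin m → FreeGroup β)
    (a b : β × Bool) : Prop :=
  ∃ (j : Fin m) (i : Fin (w j).toWord.length),
    (a = Letter.inv ((w j).toWord.get i) ∧
      b = (w j).toWord.get ⟨((i : ℕ) + 1) % (w j).toWord.length, Nat.mod_lt _ i.pos⟩) ∨
    (b = Letter.inv ((w j).toWord.get i) ∧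
      a = (w j).toWord.get ⟨((i : ℕ) + 1) % (w j).toWord.length, Nat.mod_lt _ i.pos⟩)


/-!
The first letter of a boundary point records the edge at the identity through which its ray
leaves, so `ξ ↦ (ξ 0 ∈ A)` is continuous on `∂T`. It is constant on the classes of the
decomposition: if `g wⁱ → ξ` and `g w⁻ⁱ → η`, then for large `k` the reduced words of `g wᵏ`
and `g w⁻ᵏ` either begin with the same letter (the line `g⟨w⟩` misses the identity), or the line
passes through the identity and they begin with `v'` and `v̄` for a two-letter subword `v v'` of
the cyclic word `w`, an edge of `Wh_B(*)`. So it descends to a nonconstant continuous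
`Bool`-valued function on `D`.
-/

namespace Letter

variable {β : Type*}

@[simp]
theorem inv_inv (p : β × Bool) : Letter.inv (Letter.inv p) = p := by
  simp [Letter.inv]

theorem inv_involutive : Function.Involutive (Letter.inv (β := β)) :=
  inv_inv

theorem inv_ne_self (p : β × Bool) : Letter.inv p ≠ p := by
  simp [Letter.inv, Prod.ext_iff]

theorem eq_inv_iff {p q : β × Bool} : q = Letter.inv p ↔ q.1 = p.1 ∧ q.2 ≠ p.2 := by
  obtain ⟨a, s⟩ := p
  obtain ⟨b, t⟩ := q
  cases s <;> cases t <;> simp [Letter.inv]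

theorem map_inv_eq_some {o : Option (β × Bool)} {y : β × Bool} :
    o.map Letter.inv = some y ↔ o = some (Letter.inv y) := by
  cases o with
  | none => simp
  | some z => simpa using inv_involutive.eq_iff

end Letter

theorem List.getElem?_flatten_replicate {α : Type*} (l : List α) {k i : ℕ}
    (hi : i < k * l.length) : (List.replicate k l).flatten[i]? = l[i % l.length]? := by
  induction k generalizing i with
  | zero => simp at hi
  | succ k ih =>
    rw [List.replicate_succ, List.flatten_cons]
    by_cases hil : i < l.length
    · rw [List.getElem?_append_left hil, Nat.mod_eq_of_lt hil]
    · push Not at hil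
      rw [List.getElem?_append_right hil, ih (by rw [Nat.succ_mul] at hi; omega),
        Nat.mod_eq_sub_mod hil]

/-- The cyclic word `W` contains the two-letter subword `a⁻¹ b`, i.e. `{a, b}` is an edge of its
Whitehead graph. -/
def IsCyclicTurn {β : Type*} (W : List (β × Bool)) (a b : β × Bool) : Prop :=
  ∃ i : ℕ, W[i % W.length]? = some (Letter.inv a) ∧ W[(i + 1) % W.length]? = some b

theorem IsCyclicTurn.of_flatten_replicate {β : Type*} {W : List (β × Bool)} {k i : ℕ}
    {a b : β × Bool} (hi : i + 1 < k * W.length)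
    (ha : (List.replicate k W).flatten[i]? = some (Letter.inv a))
    (hb : (List.replicate k W).flatten[i + 1]? = some b) : IsCyclicTurn W a b :=
  ⟨i, by rwa [← List.getElem?_flatten_replicate W (k := k) (by omega)],
    by rwa [← List.getElem?_flatten_replicate W hi]⟩

namespace FreeGroup

open List

section Words

variable {α : Type*}

theorem invRev_eq_reverse_map (L : List (α × Bool)) : invRev L = (L.map Letter.inv).reverse :=
  rfl

theorem getElem?_invRev {L : List (α × Bool)} {i : ℕ} (hi : i < L.length) :
    (invRev L)[i]? = L[L.length - 1 - i]?.map Letter.inv := by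
  rw [invRev_eq_reverse_map, getElem?_reverse (by simpa using hi), getElem?_map, length_map]

theorem head?_invRev (L : List (α × Bool)) : (invRev L).head? = L.getLast?.map Letter.inv := by
  rw [invRev_eq_reverse_map, head?_reverse, getLast?_map]

theorem getElem?_of_invRev_prefix {u v : List (α × Bool)} (h : invRev u <+: v) {i : ℕ}
    (hi : i < u.length) : u[i]? = v[u.length - 1 - i]?.map Letter.inv := by
  obtain ⟨r, rfl⟩ := h
  rw [getElem?_append_left (by rw [invRev_length]; omega), getElem?_invRev (by omega),
    Option.map_map, show u.length - 1 - (u.length - 1 - i) = i by omega]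
  simp [Function.comp_def]

theorem IsCyclicallyReduced.getLast?_ne_map_inv_head? {W : List (α × Bool)}
    (hW : IsCyclicallyReduced W) (hne : W ≠ []) : W.getLast? ≠ W.head?.map Letter.inv := by
  intro h
  rw [head?_eq_some_head hne, Option.map_some] at h
  exact absurd (hW.2 _ h _ (head?_eq_some_head hne) rfl) (by simp [Letter.inv])

theorem IsCyclicallyReduced.eq_nil_of_invRev_prefix_of_invRev_prefix_invRev
    {u P : List (α × Bool)} (hP : IsCyclicallyReduced P) (hne : P ≠ []) (h₁ : invRev u <+: P)
    (h₂ : invRev u <+: invRev P) : u = [] := by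
  by_contra hu
  have hL : u.length - 1 < u.length := Nat.sub_lt (length_pos_iff.2 hu) one_pos
  have h := (getElem?_of_invRev_prefix h₂ hL).symm.trans (getElem?_of_invRev_prefix h₁ hL)
  rw [Nat.sub_self, getElem?_invRev (length_pos_iff.2 hne), Option.map_map,
    Letter.inv_involutive.comp_self, Option.map_id, Nat.sub_zero, ← getLast?_eq_getElem?,
    ← head?_eq_getElem?] at h
  exact hP.getLast?_ne_map_inv_head? hne h

end Words

section Reduction

variable {α : Type*} [DecidableEq α] {u v r : List (α × Bool)}

theorem IsReduced.invRev (h : IsReduced u) : IsReduced (invRev u) := by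
  rw [isReduced_iff_reduce_eq, reduce_invRev, h.reduce_eq]

theorem reduce_append_invRev_append (hr : IsReduced r) : reduce (u ++ (invRev u ++ r)) = r := by
  rw [← hr.reduce_eq]
  refine reduce.sound ?_
  rw [← mul_mk, ← mul_mk, ← inv_mk, mul_inv_cancel_left, hr.reduce_eq]

theorem head?_reduce_append_of_invRev_prefix (hv : IsReduced v) (h : invRev u <+: v) :
    (reduce (u ++ v)).head? = v[u.length]? := by
  obtain ⟨r, rfl⟩ := h
  rw [reduce_append_invRev_append (hv.infix (suffix_append _ _).isInfix), head?_eq_getElem?,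
    getElem?_append_right (by rw [invRev_length]), invRev_length, Nat.sub_self]

theorem head?_reduce_append_of_not_invRev_prefix (hu : IsReduced u) (hv : IsReduced v)
    (hne : u ≠ []) (h : ¬ invRev u <+: v) : (reduce (u ++ v)).head? = u.head? := by
  induction u using List.reverseRecOn generalizing v with
  | nil => exact absurd rfl hne
  | append_singleton u a ih =>
    rcases v with _ | ⟨b, v⟩
    · rw [append_nil, hu.reduce_eq]
    have hinv : invRev (u ++ [a]) = Letter.inv a :: invRev u := by simp [invRev, Letter.inv]
    by_cases hb : b = Letter.inv a
    · subst hb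
      rw [hinv, cons_prefix_cons] at h
      have hu' : u ≠ [] := by rintro rfl; simp [invRev] at h
      have hstep : reduce (u ++ a :: Letter.inv a :: v) = reduce (u ++ v) :=
        reduce.Step.eq Red.Step.not
      rw [append_assoc, singleton_append, hstep,
        ih (hu.infix (prefix_append _ _).isInfix) (hv.infix (suffix_cons _ _).isInfix) hu'
          (fun h' => h ⟨rfl, h'⟩),
        head?_append_of_ne_nil _ hu']
    · have hred : IsReduced (u ++ [a] ++ b :: v) := by
        refine IsReduced.append_overlap hu ?_ (cons_ne_nil _ _)
        rw [singleton_append, isReduced_cons_cons]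
        refine ⟨fun h1 => ?_, hv⟩
        by_contra h2
        exact hb (Letter.eq_inv_iff.2 ⟨h1.symm, Ne.symm h2⟩)
      rw [hred.reduce_eq, head?_append_of_ne_nil _ (by simp)]

/- The line `u⟨W⟩` passes through the identity iff `u` is cancelled completely by `P = Wᵏ` or
by `P⁻¹`; the two heads are then consecutive letters of `P`, and otherwise both are the first
letter of `u`. -/
theorem eq_or_isCyclicTurn_of_head?_reduce {W : List (α × Bool)} (hu : IsReduced u)
    (hW : IsCyclicallyReduced W) {k : ℕ} (hk : u.length < k * W.length) {x y : α × Bool}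
    (hx : (reduce (u ++ (replicate k W).flatten)).head? = some x)
    (hy : (reduce (u ++ invRev (replicate k W).flatten)).head? = some y) :
    x = y ∨ IsCyclicTurn W y x := by
  set P := (replicate k W).flatten
  have hP : IsReduced P := (hW.flatten_replicate k).isReduced
  have hPlen : P.length = k * W.length := by simp [P]
  have hk0 : k ≠ 0 := by rintro rfl; simp at hk
  have hW0 : 0 < W.length := Nat.pos_of_mul_pos_left (by omega : 0 < k * W.length)
  by_cases hpre : invRev u <+: P <;> by_cases hsuf : invRev u <+: invRev P
  · obtain rfl := (hW.flatten_replicate k).eq_nil_of_invRev_prefix_of_invRev_prefix_invRev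
      (ne_nil_of_length_pos (l := P) (by omega)) hpre hsuf
    right
    rw [nil_append, hP.invRev.reduce_eq, head?_invRev, getLast?_flatten_replicate hk0,
      Letter.map_inv_eq_some, getLast?_eq_getElem?] at hy
    rw [nil_append, hP.reduce_eq, head?_flatten_replicate hk0, head?_eq_getElem?] at hx
    refine ⟨W.length - 1, ?_, ?_⟩
    · rwa [Nat.mod_eq_of_lt (by omega)]
    · rwa [Nat.sub_add_cancel hW0, Nat.mod_self]
  · right
    have hne : u ≠ [] := by rintro rfl; exact hsuf nil_prefix
    have hL : 0 < u.length := length_pos_iff.2 hne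
    rw [head?_reduce_append_of_invRev_prefix hP hpre] at hx
    rw [head?_reduce_append_of_not_invRev_prefix hu hP.invRev hne hsuf, head?_eq_getElem?,
      getElem?_of_invRev_prefix hpre hL, Letter.map_inv_eq_some, Nat.sub_zero] at hy
    exact .of_flatten_replicate (i := u.length - 1) (by omega) hy
      (by rwa [Nat.sub_add_cancel hL])
  · right
    have hne : u ≠ [] := by rintro rfl; exact hpre nil_prefix
    have hL : 0 < u.length := length_pos_iff.2 hne
    rw [head?_reduce_append_of_invRev_prefix hP.invRev hsuf, getElem?_invRev (by omega),
      Letter.map_inv_eq_some] at hy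
    rw [head?_reduce_append_of_not_invRev_prefix hu hP hne hpre, head?_eq_getElem?,
      getElem?_of_invRev_prefix hsuf hL, getElem?_invRev (by omega), Option.map_map,
      Letter.inv_involutive.comp_self, Option.map_id] at hx
    refine .of_flatten_replicate (i := P.length - 1 - u.length) (by omega) hy ?_
    rwa [show P.length - 1 - u.length + 1 = P.length - 1 - (u.length - 1 - 0) by omega]
  · left
    have hne : u ≠ [] := by rintro rfl; exact hpre nil_prefix
    rw [head?_reduce_append_of_not_invRev_prefix hu hP hne hpre] at hx
    rw [head?_reduce_append_of_not_invRev_prefix hu hP.invRev hne hsuf] at hy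
    exact Option.some.inj (hx.symm.trans hy)

theorem toWord_pow_of_isCyclicallyReduced {x : FreeGroup α} (hx : IsCyclicallyReduced x.toWord)
    (k : ℕ) : (x ^ k).toWord = (replicate k x.toWord).flatten := by
  rw [toWord_pow, (hx.flatten_replicate k).isReduced.reduce_eq]

theorem eq_or_isCyclicTurn_of_head?_toWord_mul_pow {g x : FreeGroup α}
    (hx : IsCyclicallyReduced x.toWord) {k : ℕ} (hk : g.toWord.length < k) {a b : α × Bool}
    (ha : (g * x ^ k).toWord.head? = some a) (hb : (g * x⁻¹ ^ k).toWord.head? = some b) :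
    a = b ∨ IsCyclicTurn x.toWord b a := by
  rcases eq_or_ne x 1 with rfl | hx1
  · simp only [one_pow, inv_one, mul_one] at ha hb
    exact .inl (Option.some.inj (ha.symm.trans hb))
  have hn : 0 < x.toWord.length := length_pos_iff.2 (mt toWord_eq_nil_iff.1 hx1)
  rw [toWord_mul, toWord_pow_of_isCyclicallyReduced hx] at ha
  rw [inv_pow, toWord_mul, toWord_inv, toWord_pow_of_isCyclicallyReduced hx] at hb
  exact eq_or_isCyclicTurn_of_head?_reduce isReduced_toWord hx (by nlinarith) ha hb

end Reduction

end FreeGroup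

open FreeGroup Filter

section Boundary

variable {β : Type*} [DecidableEq β]

theorem CyclicallyReduced.isCyclicallyReduced_toWord {x : FreeGroup β}
    (h : CyclicallyReduced x) : IsCyclicallyReduced x.toWord := by
  refine ⟨isReduced_toWord, fun a ha b hb hab => ?_⟩
  have hne : x.toWord ≠ [] := by rintro h; simp [h] at ha
  rw [List.getLast?_eq_some_getLast hne, Option.mem_some_iff] at ha
  rw [List.head?_eq_some_head hne, Option.mem_some_iff] at hb
  subst ha hb
  by_contra hne'
  exact h hne (Letter.eq_inv_iff.2 ⟨hab.symm, Ne.symm hne'⟩)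

theorem ConvergesTo.eventually_head?_toWord {u : ℕ → FreeGroup β} {ξ : TreeBoundary β}
    (h : ConvergesTo u ξ) : ∀ᶠ i in atTop, (u i).toWord.head? = some (ξ.1 0) := by
  obtain ⟨i₀, hi₀⟩ := h 1
  filter_upwards [eventually_ge_atTop i₀] with i hi
  simpa [List.take_one, prefixWord] using hi₀ i hi

theorem eq_or_isCyclicTurn_of_convergesTo {g x : FreeGroup β} (hx : IsCyclicallyReduced x.toWord)
    {ξ η : TreeBoundary β} (hξ : ConvergesTo (fun i => g * x ^ i) ξ)
    (hη : ConvergesTo (fun i => g * x⁻¹ ^ i) η) :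
    ξ.1 0 = η.1 0 ∨ IsCyclicTurn x.toWord (η.1 0) (ξ.1 0) := by
  obtain ⟨k, hk, hξk, hηk⟩ := ((eventually_gt_atTop g.toWord.length).and
    (hξ.eventually_head?_toWord.and hη.eventually_head?_toWord)).exists
  exact eq_or_isCyclicTurn_of_head?_toWord_mul_pow hx hk hξk hηk

theorem whAdj_of_isCyclicTurn {m : ℕ} {w : Fin m → FreeGroup β} {j : Fin m} {a b : β × Bool}
    (h : IsCyclicTurn (w j).toWord a b) : WhAdj w a b := by
  obtain ⟨i, ha, hb⟩ := h
  obtain ⟨hi, ha⟩ := List.getElem?_eq_some_iff.1 ha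
  refine ⟨j, ⟨i % (w j).toWord.length, hi⟩, .inl ⟨?_, ?_⟩⟩
  · simp [ha]
  · simp only [List.get_eq_getElem, Nat.mod_add_mod]
    exact (List.getElem_of_getElem? hb).2.symm

theorem EndRel.mem_iff_mem {m : ℕ} {w : Fin m → FreeGroup β} (hw : ∀ j, CyclicallyReduced (w j))
    {A : Set (β × Bool)} (hA : ∀ a b, WhAdj w a b → (a ∈ A ↔ b ∈ A)) {ξ η : TreeBoundary β}
    (h : EndRel w ξ η) : ξ.1 0 ∈ A ↔ η.1 0 ∈ A := by
  have of_line : ∀ (g : FreeGroup β) (j : Fin m) (ξ η : TreeBoundary β),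
      ConvergesTo (fun i => g * w j ^ i) ξ → ConvergesTo (fun i => g * (w j)⁻¹ ^ i) η →
      (ξ.1 0 ∈ A ↔ η.1 0 ∈ A) := fun g j ξ η hξ hη =>
    (eq_or_isCyclicTurn_of_convergesTo (hw j).isCyclicallyReduced_toWord hξ hη).elim
      (fun h => h ▸ Iff.rfl) (fun h => (hA _ _ (whAdj_of_isCyclicTurn h)).symm)
  rcases h with rfl | ⟨g, j, ⟨hξ, hη⟩ | ⟨hη, hξ⟩⟩
  · rfl
  · exact of_line g j ξ η hξ hη
  · exact (of_line g j η ξ hη hξ).symm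

def TreeBoundary.const (p : β × Bool) : TreeBoundary β :=
  ⟨fun _ => p, fun _ => (Letter.inv_ne_self p).symm⟩

end Boundary

theorem stmt_7_general {β : Type*} [DecidableEq β] [TopologicalSpace β]
    [DiscreteTopology β] {m : ℕ} (w : Fin m → FreeGroup β)
    (h2 : ∀ j, CyclicallyReduced (w j))
    (hdisc : ∃ A : Set (β × Bool), A.Nonempty ∧ Aᶜ.Nonempty ∧
      ∀ a b : β × Bool, WhAdj w a b → (a ∈ A ↔ b ∈ A)) :
    ¬ PreconnectedSpace (Quot (EndRel w)) := by
  obtain ⟨A, ⟨p, hp⟩, ⟨q, hq⟩, hA⟩ := hdisc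
  intro hconn
  have hcont : Continuous fun ξ : TreeBoundary β => A.boolIndicator (ξ.1 0) :=
    (continuous_of_discreteTopology (f := A.boolIndicator)).comp
      ((continuous_apply 0).comp continuous_subtype_val)
  have hf := continuous_quot_lift (fun ξ η h => Bool.eq_iff_iff.2 <| by
    simpa only [← Set.mem_iff_boolIndicator] using EndRel.mem_iff_mem h2 hA h) hcont
  have := hconn.constant hf (x := Quot.mk _ (TreeBoundary.const p))
    (y := Quot.mk _ (TreeBoundary.const q))
  simp_all [TreeBoundary.const, Set.boolIndicator]

/-- If for some free basis the Whitehead graph of the line pattern is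
disconnected (its vertex set splits into two nonempty parts with no edges
between them), then the decomposition space is disconnected. -/
theorem stmt_7 {β : Type*} [DecidableEq β] [Fintype β] [TopologicalSpace β]
    [DiscreteTopology β] {m : ℕ} (w : Fin m → FreeGroup β)
    (h1 : ∀ j, w j ≠ 1) (h2 : ∀ j, CyclicallyReduced (w j))
    (hdisc : ∃ A : Set (β × Bool), A.Nonempty ∧ Aᶜ.Nonempty ∧
      ∀ a b : β × Bool, WhAdj w a b → (a ∈ A ↔ b ∈ A)) :
    ¬ PreconnectedSpace (Quot (EndRel w)) :=
  stmt_7_general w h2 hdisc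
end

section
/- Let {S_i}_{i∈I} be a collection of subsets of a set X such that each S_i partitions X \ S_i into two pieces A_i^0 and A_i^1. Define vertices of a graph as functions V assigning to each i one of A_i^0, A_i^1, subject to the consistency condition that if the chosen set at i is contained in some A_j^ε then the choice at j is A_j^ε; edges join vertices differing in exactly one coordinate. Then for a vertex V with A_i^ε ∈ V, the set W = (V \ {A_i^ε}) ∪ {A_i^{1+ε}} is a vertex if and only if A_i^ε is minimal in V, i.e., A_i^ε contains no other element of V. -/
/-!
Flipping coordinate `i` only changes the halfspace chosen at `i`, so the consistency of the flipped
choice can fail only along an inclusion into or out of `A i`. An inclusion `A j (V j) ⊆ A i (V i)` of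
another chosen halfspace is exactly such a failure. Conversely, an inclusion `A i (!V i) ⊆ A k ε`
dualises by two-sidedness to `A k (!ε) ⊆ A i (V i)`, which minimality forbids unless `V k = ε`; and
an inclusion `A j (V j) ⊆ A i ε` forces `ε = V i` because `V` is a vertex, which minimality again
forbids.
-/

namespace Sageev

variable {X I : Type*} (A : I → Bool → Set X)

def IsVertex (V : I → Bool) : Prop :=
  ∀ i j ε, A i (V i) ⊆ A j ε → V j = ε

def IsMinimalAt (V : I → Bool) (i : I) : Prop :=
  ∀ j, j ≠ i → ¬ A j (V j) ⊆ A i (V i)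

variable {A}

theorem eq_of_halfspace_subset (hdisj : ∀ i, Disjoint (A i false) (A i true))
    (hne : ∀ i ε, (A i ε).Nonempty) {i : I} {ε δ : Bool} (h : A i ε ⊆ A i δ) : ε = δ := by
  by_contra hεδ
  obtain rfl : δ = !ε := Bool.eq_not_iff.mpr (Ne.symm hεδ)
  have hdisj' : Disjoint (A i ε) (A i (!ε)) := by cases ε <;> simp [hdisj, disjoint_comm]
  exact (hne i ε).ne_empty (hdisj'.eq_bot_of_le h)

variable [DecidableEq I]

theorem IsVertex.isMinimalAt_of_update {V : I → Bool} {i : I}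
    (hW : IsVertex A (Function.update V i (!V i))) : IsMinimalAt A V i := by
  intro j hji hsub
  have hWj : Function.update V i (!V i) j = V j := Function.update_of_ne hji _ _
  have := hW j i (V i) (hWj ▸ hsub)
  simp at this

theorem IsVertex.update_not (hdisj : ∀ i, Disjoint (A i false) (A i true))
    (hne : ∀ i ε, (A i ε).Nonempty)
    (hopp : ∀ i j ε δ, i ≠ j → A i ε ⊆ A j δ → A j (!δ) ⊆ A i (!ε))
    {V : I → Bool} (hV : IsVertex A V) {i : I} (hmin : IsMinimalAt A V i) :
    IsVertex A (Function.update V i (!V i)) := by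
  intro j k ε hsub
  rcases eq_or_ne j i with rfl | hji
  · rw [Function.update_self] at hsub
    rcases eq_or_ne k j with rfl | hkj
    · rw [Function.update_self]
      exact eq_of_halfspace_subset hdisj hne hsub
    · rw [Function.update_of_ne hkj]
      have hdual : A k (!ε) ⊆ A j (V j) := by simpa using hopp j k (!V j) ε hkj.symm hsub
      by_contra hVk
      exact hmin k hkj (by rwa [Bool.eq_not_iff.mpr hVk])
  · rw [Function.update_of_ne hji] at hsub
    rcases eq_or_ne k i with rfl | hki
    · exact absurd (hV j k ε hsub ▸ hsub) (hmin j hji)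
    · rw [Function.update_of_ne hki]
      exact hV j k ε hsub

end Sageev

/-- Sageev's adjacency lemma for the cube complex dual to a collection of
two-sided cut sets `{S i}` with halfspaces `A i ε` (superscripts mod 2,
modelled on `Bool`). A choice function `V` is a vertex if it is consistent:
whenever the chosen halfspace at `i` is contained in some halfspace of `j`,
the choice at `j` is that halfspace. Flipping the coordinate `i` of a vertex
`V` yields a vertex if and only if the chosen halfspace `A i (V i)` is minimal
in `V`, i.e. contains no other chosen halfspace. -/
theorem stmt_11 {X I : Type*} [DecidableEq I] (A : I → Bool → Set X)
    (hdisj : ∀ i, Disjoint (A i false) (A i true))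
    (hne : ∀ i ε, (A i ε).Nonempty)
    (hopp : ∀ i j ε δ, i ≠ j → A i ε ⊆ A j δ → A j (!δ) ⊆ A i (!ε))
    (V : I → Bool)
    (hV : ∀ i j ε, A i (V i) ⊆ A j ε → V j = ε) (i : I) :
    (∀ j k ε, A j (Function.update V i (!(V i)) j) ⊆ A k ε →
        Function.update V i (!(V i)) k = ε) ↔
      ∀ j, j ≠ i → ¬ A j (V j) ⊆ A i (V i) :=
  ⟨Sageev.IsVertex.isMinimalAt_of_update, Sageev.IsVertex.update_not hdisj hne hopp hV⟩
end
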